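/- A finite simple graph G is equimatchable if and only if G does not contain a maximal matching with an augmenting P4. -/

import Mathlib

/-!
If `M` is maximal and `N` is a larger matching, some `N`-edge `ux` has `u` unsaturated by `M`,
since otherwise the `2|N|` vertices covered by `N` lie among the `2|M|` covered by `M`. For
`xy ∈ M`, exchanging `xy` for `ux` keeps the size and shares one more edge with `N`; the result
is still maximal unless `y` has an `M`-unsaturated neighbour `w ≠ u`, and then `u x y w` is an
augmenting `P₄`. Induction on `|N \ M|` concludes. Conversely, an augmenting `P₄` yields a
matching with one more edge, which extends to a larger maximal matching.
-/

open SimpleGraph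

variable {V : Type*}

/-- `M` is a matching in `G`: a set of pairwise vertex-disjoint edges of `G`. -/
def IsMatchingIn (G : SimpleGraph V) (M : Finset (Sym2 V)) : Prop :=
  (∀ e ∈ M, e ∈ G.edgeSet) ∧
    ∀ e ∈ M, ∀ f ∈ M, e ≠ f → ∀ v : V, v ∈ e → v ∉ f

/-- `M` is a maximal matching in `G`: a matching not properly contained in another matching. -/
def IsMaximalMatchingIn (G : SimpleGraph V) (M : Finset (Sym2 V)) : Prop :=
  IsMatchingIn G M ∧ ∀ M', IsMatchingIn G M' → M ⊆ M' → M' = M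

/-- `M` saturates (covers) the vertex `v`. -/
def Sat (M : Finset (Sym2 V)) (v : V) : Prop := ∃ e ∈ M, v ∈ e

/-- The matching number `ν(G)`. -/
noncomputable def nuNum (G : SimpleGraph V) : ℕ :=
  sSup {n | ∃ M, IsMatchingIn G M ∧ M.card = n}

/-- The minimum maximal matching number `β(G)`. -/
noncomputable def betaNum (G : SimpleGraph V) : ℕ :=
  sInf {n | ∃ M, IsMaximalMatchingIn G M ∧ M.card = n}

/-- The matching gap `μ(G) = ν(G) - β(G)`. -/
noncomputable def muGap (G : SimpleGraph V) : ℕ := nuNum G - betaNum G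

/-- `M` has an augmenting `P₄`: a path `u w y v` on four distinct vertices with
`wy ∈ M` and `u`, `v` not saturated by `M`. -/
def HasAugP4 (G : SimpleGraph V) (M : Finset (Sym2 V)) : Prop :=
  ∃ u w y v : V, u ≠ w ∧ u ≠ y ∧ u ≠ v ∧ w ≠ y ∧ w ≠ v ∧ y ≠ v ∧
    G.Adj u w ∧ G.Adj w y ∧ G.Adj y v ∧ s(w, y) ∈ M ∧ ¬ Sat M u ∧ ¬ Sat M v


/-- A graph is equimatchable if all its maximal matchings have the same size. -/
def Equimatchable (G : SimpleGraph V) : Prop :=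
  ∀ M M' : Finset (Sym2 V), IsMaximalMatchingIn G M → IsMaximalMatchingIn G M' →
    M.card = M'.card

variable {G : SimpleGraph V} {M N : Finset (Sym2 V)} {e f : Sym2 V} {a b u v x y : V}

@[simp]
lemma sat_insert [DecidableEq V] : Sat (insert e M) v ↔ v ∈ e ∨ Sat M v := by
  simp [Sat]

lemma Sat.mono (h : Sat M v) (hMN : M ⊆ N) : Sat N v :=
  let ⟨e, he, hv⟩ := h
  ⟨e, hMN he, hv⟩

lemma Sat.erase [DecidableEq V] (h : Sat M v) (hv : v ∉ e) : Sat (M.erase e) v :=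
  let ⟨f, hf, hvf⟩ := h
  ⟨f, Finset.mem_erase.2 ⟨fun hfe => hv (hfe ▸ hvf), hf⟩, hvf⟩

lemma Sat.of_erase [DecidableEq V] (h : Sat (M.erase e) v) : Sat M v :=
  h.mono (Finset.erase_subset _ _)

lemma sat_of_mem (he : e ∈ M) (hv : v ∈ e) : Sat M v := ⟨e, he, hv⟩

lemma card_insert_of_not_sat [DecidableEq V] (ha : ¬ Sat M a) :
    (insert s(a, b) M).card = M.card + 1 :=
  Finset.card_insert_of_notMem fun h => ha (sat_of_mem h (Sym2.mem_mk_left a b))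

namespace IsMatchingIn

lemma eq_of_mem (hM : IsMatchingIn G M) (he : e ∈ M) (hf : f ∈ M) (hve : v ∈ e) (hvf : v ∈ f) :
    e = f :=
  by_contra fun h => hM.2 e he f hf h v hve hvf

lemma mono (hM : IsMatchingIn G M) (h : N ⊆ M) : IsMatchingIn G N :=
  ⟨fun e he => hM.1 e (h he), fun e he f hf => hM.2 e (h he) f (h hf)⟩

lemma adj (hM : IsMatchingIn G M) (h : s(a, b) ∈ M) : G.Adj a b := hM.1 _ h

lemma erase [DecidableEq V] (hM : IsMatchingIn G M) : IsMatchingIn G (M.erase e) :=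
  hM.mono (Finset.erase_subset _ _)

lemma insert [DecidableEq V] (hM : IsMatchingIn G M) (hab : G.Adj a b) (ha : ¬ Sat M a)
    (hb : ¬ Sat M b) : IsMatchingIn G (insert s(a, b) M) := by
  have hfree : ∀ f ∈ M, ∀ v ∈ s(a, b), v ∉ f := by
    rintro f hf v hv hvf
    rcases Sym2.mem_iff.1 hv with rfl | rfl
    · exact ha (sat_of_mem hf hvf)
    · exact hb (sat_of_mem hf hvf)
  refine ⟨?_, ?_⟩
  · intro e he
    rcases Finset.mem_insert.1 he with rfl | he
    exacts [hab, hM.1 e he]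
  · intro e he f hf hef v hve hvf
    rcases Finset.mem_insert.1 he with rfl | he <;> rcases Finset.mem_insert.1 hf with rfl | hf
    exacts [hef rfl, hfree f hf v hve hvf, hfree e he v hvf hve, hM.2 e he f hf hef v hve hvf]

lemma not_sat_erase [DecidableEq V] (hM : IsMatchingIn G M) (he : e ∈ M) (hv : v ∈ e) :
    ¬ Sat (M.erase e) v := by
  rintro ⟨f, hf, hvf⟩
  exact Finset.ne_of_mem_erase hf (hM.eq_of_mem (Finset.mem_of_mem_erase hf) he hvf hv)

lemma card_biUnion_toFinset [DecidableEq V] (hM : IsMatchingIn G M) :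
    (M.biUnion Sym2.toFinset).card = 2 * M.card := by
  rw [Finset.card_biUnion, Finset.sum_congr rfl fun e he =>
    Sym2.card_toFinset_of_not_isDiag e (G.not_isDiag_of_mem_edgeSet (hM.1 e he))]
  · simp [mul_comm]
  · intro e he f hf hef
    exact Finset.disjoint_left.2 fun v hve hvf =>
      hM.2 e he f hf hef v (Sym2.mem_toFinset.1 hve) (Sym2.mem_toFinset.1 hvf)

lemma card_le_of_sat_imp (hM : IsMatchingIn G M) (hN : IsMatchingIn G N)
    (h : ∀ v, Sat N v → Sat M v) : N.card ≤ M.card := by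
  classical
  have hsub : N.biUnion Sym2.toFinset ⊆ M.biUnion Sym2.toFinset := by
    intro v hv
    obtain ⟨e, he, hve⟩ := Finset.mem_biUnion.1 hv
    obtain ⟨f, hf, hvf⟩ := h v ⟨e, he, Sym2.mem_toFinset.1 hve⟩
    exact Finset.mem_biUnion.2 ⟨f, hf, Sym2.mem_toFinset.2 hvf⟩
  have := Finset.card_le_card hsub
  rw [hN.card_biUnion_toFinset, hM.card_biUnion_toFinset] at this
  omega

lemma exists_maximal_superset [Finite V] (hM : IsMatchingIn G M) :
    ∃ M', M ⊆ M' ∧ IsMaximalMatchingIn G M' := by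
  obtain ⟨M', hMM', hmax⟩ := Finite.exists_le_maximal (p := fun M' => IsMatchingIn G M') hM
  exact ⟨M', hMM', hmax.1, fun M'' hM'' h => (hmax.eq_of_le hM'' h).symm⟩

end IsMatchingIn

lemma isMaximalMatchingIn_iff :
    IsMaximalMatchingIn G M ↔ IsMatchingIn G M ∧ ∀ a b, G.Adj a b → ¬ Sat M a → Sat M b := by
  classical
  refine ⟨fun hM => ⟨hM.1, fun a b hab ha => by_contra fun hb => ?_⟩, fun ⟨hM, hsat⟩ => ⟨hM, ?_⟩⟩
  · have := hM.2 _ (hM.1.insert hab ha hb) (Finset.subset_insert _ _)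
    exact ha (sat_of_mem (this ▸ Finset.mem_insert_self _ _) (Sym2.mem_mk_left a b))
  · intro M' hM' hMM'
    refine (Finset.Subset.antisymm hMM' fun e he => by_contra fun heM => ?_).symm
    induction e using Sym2.ind with
    | _ a b =>
    have hfree : ∀ v ∈ s(a, b), ¬ Sat M v := fun v hv ⟨f, hf, hvf⟩ =>
      hM'.2 _ he f (hMM' hf) (fun h => heM (h ▸ hf)) v hv hvf
    exact hfree b (Sym2.mem_mk_right a b)
      (hsat a b (hM'.adj he) (hfree a (Sym2.mem_mk_left a b)))

lemma IsMaximalMatchingIn.sat_of_adj (hM : IsMaximalMatchingIn G M) (hab : G.Adj a b)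
    (ha : ¬ Sat M a) : Sat M b :=
  (isMaximalMatchingIn_iff.1 hM).2 a b hab ha

lemma HasAugP4.exists_matching_card_succ (hM : IsMatchingIn G M) (h : HasAugP4 G M) :
    ∃ M', IsMatchingIn G M' ∧ M'.card = M.card + 1 := by
  classical
  obtain ⟨u, w, y, v, huw, huy, huv, hwy, hwv, hyv, hauw, -, hayv, hwyM, hu, hv⟩ := h
  set M₀ := M.erase s(w, y)
  have hu₀ : ¬ Sat M₀ u := fun h => hu h.of_erase
  have hv₀ : ¬ Sat M₀ v := fun h => hv h.of_erase
  have hw₀ : ¬ Sat M₀ w := hM.not_sat_erase hwyM (Sym2.mem_mk_left w y)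
  have hy₀ : ¬ Sat M₀ y := hM.not_sat_erase hwyM (Sym2.mem_mk_right w y)
  have hM₁ := hM.erase.insert hayv hy₀ hv₀
  have hu₁ : ¬ Sat (insert s(y, v) M₀) u := by simp [huy, huv, hu₀]
  have hw₁ : ¬ Sat (insert s(y, v) M₀) w := by simp [hwy, hwv, hw₀]
  refine ⟨_, hM₁.insert hauw hu₁ hw₁, ?_⟩
  rw [card_insert_of_not_sat hu₁, card_insert_of_not_sat hy₀, Finset.card_erase_add_one hwyM]

lemma IsMaximalMatchingIn.not_equimatchable_of_hasAugP4 [Finite V]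
    (hM : IsMaximalMatchingIn G M) (h : HasAugP4 G M) : ¬ Equimatchable G := by
  intro hG
  obtain ⟨M', hM', hcard⟩ := h.exists_matching_card_succ hM.1
  obtain ⟨M'', hM'M'', hM''⟩ := hM'.exists_maximal_superset
  have := Finset.card_le_card hM'M''
  have := hG M M'' hM hM''
  omega

lemma IsMaximalMatchingIn.exchange [DecidableEq V] (hM : IsMaximalMatchingIn G M)
    (hP : ¬ HasAugP4 G M) (hu : ¬ Sat M u) (hux : G.Adj u x) (hxy : s(x, y) ∈ M) :
    IsMaximalMatchingIn G (insert s(u, x) (M.erase s(x, y))) := by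
  have hy : Sat M y := sat_of_mem hxy (Sym2.mem_mk_right x y)
  have hu₀ : ¬ Sat (M.erase s(x, y)) u := fun h => hu h.of_erase
  have hx₀ := hM.1.not_sat_erase hxy (Sym2.mem_mk_left x y)
  refine isMaximalMatchingIn_iff.2
    ⟨hM.1.erase.insert hux hu₀ hx₀, fun a b hab ha => by_contra fun hb => ?_⟩
  have hfree : ∀ v, ¬ Sat (insert s(u, x) (M.erase s(x, y))) v →
      v = y ∨ (¬ Sat M v ∧ v ≠ u) := by
    intro v hv
    simp only [sat_insert, Sym2.mem_iff, not_or] at hv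
    obtain ⟨⟨hvu, hvx⟩, hv₀⟩ := hv
    by_cases hvM : Sat M v
    · exact Or.inl (by_contra fun hvy => hv₀ (hvM.erase (by simp [Sym2.mem_iff, hvx, hvy])))
    · exact Or.inr ⟨hvM, hvu⟩
  have hP4 : ∀ w, G.Adj y w → ¬ Sat M w → w ≠ u → False := fun w hyw hw hwu =>
    hP ⟨u, x, y, w, hux.ne, fun h => hu (h ▸ hy), hwu.symm, (hM.1.adj hxy).ne,
      fun h => hw (h ▸ sat_of_mem hxy (Sym2.mem_mk_left x y)), hyw.ne, hux, hM.1.adj hxy, hyw,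
      hxy, hu, hw⟩
  rcases hfree a ha with rfl | ⟨haM, hau⟩ <;> rcases hfree b hb with rfl | ⟨hbM, hbu⟩
  · exact hab.ne rfl
  · exact hP4 b hab hbM hbu
  · exact hP4 a hab.symm haM hau
  · exact hbM (hM.sat_of_adj hab haM)

theorem IsMaximalMatchingIn.card_le_of_forall_not_hasAugP4 [DecidableEq V]
    (H : ∀ M, IsMaximalMatchingIn G M → ¬ HasAugP4 G M) {M : Finset (Sym2 V)}
    (hM : IsMaximalMatchingIn G M) (hN : IsMatchingIn G N) : N.card ≤ M.card := by
  by_cases hNM : ∀ v, Sat N v → Sat M v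
  · exact hM.1.card_le_of_sat_imp hN hNM
  push Not at hNM
  obtain ⟨u, ⟨f, hf, huf⟩, hu⟩ := hNM
  obtain ⟨x, rfl⟩ := Sym2.mem_iff_exists.1 huf
  have hux : G.Adj u x := hN.adj hf
  obtain ⟨e, he, hxe⟩ := hM.sat_of_adj hux hu
  obtain ⟨y, rfl⟩ := Sym2.mem_iff_exists.1 hxe
  have hM' := hM.exchange (H M hM) hu hux he
  have hxy_notMem : s(x, y) ∉ N := fun h => by
    have := hN.eq_of_mem h hf (Sym2.mem_mk_left x y) (Sym2.mem_mk_right u x)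
    exact hu (sat_of_mem he (by rw [this]; exact Sym2.mem_mk_left u x))
  have hlt : (N \ insert s(u, x) (M.erase s(x, y))).card < (N \ M).card := by
    refine Finset.card_lt_card (Finset.ssubset_iff_of_subset ?_ |>.2 ?_)
    · intro g hg
      simp only [Finset.mem_sdiff, Finset.mem_insert, Finset.mem_erase, not_or, not_and] at hg ⊢
      exact ⟨hg.1, fun hgM => hg.2.2 (fun hgxy => hxy_notMem (hgxy ▸ hg.1)) hgM⟩
    · exact ⟨s(u, x), Finset.mem_sdiff.2 ⟨hf, fun h => hu (sat_of_mem h (Sym2.mem_mk_left u x))⟩,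
        by simp⟩
  have hcard : (insert s(u, x) (M.erase s(x, y))).card = M.card := by
    rw [card_insert_of_not_sat (fun h => hu h.of_erase), Finset.card_erase_add_one he]
  exact hcard ▸ hM'.card_le_of_forall_not_hasAugP4 H hN
termination_by (N \ M).card
decreasing_by exact hlt

theorem stmt_4 {V : Type*} [Fintype V] (G : SimpleGraph V) :
    Equimatchable G ↔ ¬ ∃ M : Finset (Sym2 V), IsMaximalMatchingIn G M ∧ HasAugP4 G M := by
  classical
  refine ⟨fun hG ⟨M, hM, hP⟩ => hM.not_equimatchable_of_hasAugP4 hP hG, fun H M M' hM hM' => ?_⟩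
  have H' : ∀ M, IsMaximalMatchingIn G M → ¬ HasAugP4 G M := fun M hM hP => H ⟨M, hM, hP⟩
  exact le_antisymm (hM'.card_le_of_forall_not_hasAugP4 H' hM.1)
    (hM.card_le_of_forall_not_hasAugP4 H' hM'.1)
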